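/- arXiv:2505.04929 — 2 statements merged into one kernel-verified Lean document; each statement's English description precedes it below -/
import Mathlib

section
/- Let p ≥ 2 be an integer. (i) If m = (p choose 2), then g(m) = p − 1, and a graph G with m edges attains Mad(G) = p − 1 if and only if its non-isolated vertices induce a copy of K_p. (ii) If (p choose 2) < m < ((p+1) choose 2), say m = (p choose 2) + r with 0 < r < p, then g(m) = max{p − 1, 2m/(p+1)}; moreover, a graph G with m edges attains g(m) precisely in the following cases: if 0 < r < (p−1)/2, exactly when G contains K_p as a subgraph; if (p−1)/2 < r < p, exactly when G has exactly p+1 non-isolated vertices; and if r = (p−1)/2, exactly when G contains K_p or has exactly p+1 non-isolated vertices. -/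
/-!
A vertex set `X` with `n` vertices spanning `e` of the `m` edges has average degree
`2e/n ≤ n - 1`, with equality exactly when `X` is a clique, and `2e/n ≤ 2m/n`, with equality
exactly when `X` contains every edge. Hence sets of at most `p` vertices have average degree at
most `p - 1` and larger sets at most `2m/(p+1)`, so `Mad G ≤ max (p - 1) (2m/(p+1))`; a graph on
`p + 1` vertices containing `K_p` attains this whenever `C(p,2) ≤ m ≤ C(p+1,2)`. In an extremal
graph a densest set attains one of the two bounds, so it is a `p`-clique or a `(p+1)`-set carrying
all edges, and which bound is the maximum is read off from
`2m/(p+1) = p - 1 + (2r + 1 - p)/(p + 1)`.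
-/

/-- Number of edges of a finite simple graph. -/
noncomputable def edgeCnt {V : Type} [Fintype V] (G : SimpleGraph V) : ℕ :=
  G.edgeSet.ncard

/-- Number of edges of `G` with both endpoints in `X`. -/
noncomputable def inducedEdgeCnt {V : Type} [Fintype V] (G : SimpleGraph V) (X : Finset V) : ℕ :=
  {e : Sym2 V | e ∈ G.edgeSet ∧ ∀ v ∈ e, v ∈ X}.ncard

/-- Maximum average degree of a finite simple graph. -/
noncomputable def Mad {V : Type} [Fintype V] (G : SimpleGraph V) : ℝ :=
  sSup {d : ℝ | ∃ X : Finset V, X.Nonempty ∧ d = 2 * (inducedEdgeCnt G X : ℝ) / (X.card : ℝ)}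

/-- A `k`-decomposition of the complete graph `K_n`. -/
def IsKDecomp {k n : ℕ} (G : Fin k → SimpleGraph (Fin n)) : Prop :=
  (∀ i j, i ≠ j → Disjoint (G i).edgeSet (G j).edgeSet) ∧
  (⋃ i, (G i).edgeSet) = (⊤ : SimpleGraph (Fin n)).edgeSet

/-- `M(k,n)`: maximum of `Mad(G_1)+…+Mad(G_k)` over all `k`-decompositions of `K_n`. -/
noncomputable def MSum (k n : ℕ) : ℝ :=
  sSup {s : ℝ | ∃ G : Fin k → SimpleGraph (Fin n), IsKDecomp G ∧ s = ∑ i, Mad (G i)}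

/-- `M^L(k,N)`: maximum of `Mad(G_1)+…+Mad(G_k)` over all lists of `k` finite graphs
with `N` edges in total. -/
noncomputable def MSumL (k N : ℕ) : ℝ :=
  sSup {s : ℝ | ∃ (V : Fin k → Type) (hV : ∀ i, Fintype (V i)) (G : ∀ i, SimpleGraph (V i)),
    (∑ i, @edgeCnt (V i) (hV i) (G i)) = N ∧ s = ∑ i, @Mad (V i) (hV i) (G i)}

/-- `g(m)`: maximum of `Mad(G)` over all finite simple graphs with exactly `m` edges. -/
noncomputable def gMax (m : ℕ) : ℝ :=
  sSup {d : ℝ | ∃ (V : Type) (hV : Fintype V) (G : SimpleGraph V),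
    @edgeCnt V hV G = m ∧ d = @Mad V hV G}

/-- The complete graph on the vertex subset `S` inside `Fin n`. -/
def cliqueOn {n : ℕ} (S : Finset (Fin n)) : SimpleGraph (Fin n) :=
  SimpleGraph.fromRel (fun a b => a ∈ S ∧ b ∈ S)

open SimpleGraph Finset

lemma image_val_edgeSet_induce {W : Type} (H : SimpleGraph W) (s : Set W) :
    Sym2.map Subtype.val '' (H.induce s).edgeSet = H.edgeSet ∩ s.sym2 := by
  ext e
  induction e using Sym2.ind
  aesop (add simp [Sym2.exists, adj_comm])

section EdgeCount

variable {V : Type} [Fintype V] (G : SimpleGraph V) (X : Finset V)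

lemma edgeCnt_eq_card_edgeFinset [DecidableRel G.Adj] : edgeCnt G = #G.edgeFinset :=
  Set.ncard_eq_toFinset_card' _

lemma edgeCnt_le_choose_two : edgeCnt G ≤ (Fintype.card V).choose 2 := by
  classical
  rw [edgeCnt_eq_card_edgeFinset]
  exact card_edgeFinset_le_card_choose_two

lemma edgeCnt_eq_choose_two_iff : edgeCnt G = (Fintype.card V).choose 2 ↔ G = ⊤ := by
  classical
  rw [edgeCnt_eq_card_edgeFinset, ← card_edgeFinset_top_eq_card_choose_two]
  refine ⟨fun h => ?_, fun h => by subst h; convert rfl⟩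
  have hsub : G.edgeFinset ⊆ (⊤ : SimpleGraph V).edgeFinset := edgeFinset_mono le_top
  exact edgeFinset_inj.1 (eq_of_subset_of_card_le hsub h.ge)

lemma inducedEdgeCnt_eq_ncard_inter_sym2 :
    inducedEdgeCnt G X = (G.edgeSet ∩ (X : Set V).sym2).ncard := by
  unfold inducedEdgeCnt
  congr 1
  ext e
  simp [Set.mem_sym2_iff_subset, Set.subset_def]

lemma inducedEdgeCnt_eq_edgeCnt_induce :
    inducedEdgeCnt G X = edgeCnt (G.induce (X : Set V)) := by
  rw [inducedEdgeCnt_eq_ncard_inter_sym2, ← image_val_edgeSet_induce,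
    Set.ncard_image_of_injective _ (Sym2.map.injective Subtype.val_injective), edgeCnt]

lemma inducedEdgeCnt_le_choose_two : inducedEdgeCnt G X ≤ (#X).choose 2 := by
  simpa [inducedEdgeCnt_eq_edgeCnt_induce] using edgeCnt_le_choose_two (G.induce (X : Set V))

lemma inducedEdgeCnt_eq_choose_two_iff :
    inducedEdgeCnt G X = (#X).choose 2 ↔ G.IsClique (X : Set V) := by
  rw [← induce_eq_top, ← edgeCnt_eq_choose_two_iff, inducedEdgeCnt_eq_edgeCnt_induce]
  simp

lemma inducedEdgeCnt_le_edgeCnt : inducedEdgeCnt G X ≤ edgeCnt G := by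
  rw [inducedEdgeCnt_eq_ncard_inter_sym2]
  exact Set.ncard_le_ncard Set.inter_subset_left G.edgeSet.toFinite

lemma inducedEdgeCnt_eq_edgeCnt_iff : inducedEdgeCnt G X = edgeCnt G ↔ G.support ⊆ X := by
  rw [inducedEdgeCnt_eq_ncard_inter_sym2, edgeCnt, ← edgeSet_subset_sym2_iff,
    ← Set.inter_eq_left]
  exact ⟨fun h => Set.eq_of_subset_of_ncard_le Set.inter_subset_left h.ge G.edgeSet.toFinite,
    fun h => by rw [h]⟩

lemma edgeCnt_le_choose_two_ncard_support : edgeCnt G ≤ G.support.ncard.choose 2 := by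
  classical
  have h := (inducedEdgeCnt_eq_edgeCnt_iff G G.support.toFinset).2 (by simp)
  rw [← h, Set.ncard_eq_toFinset_card']
  exact inducedEdgeCnt_le_choose_two G _

end EdgeCount

-- `avgDegree G ∅ = 0` (division by zero), so `avgDegree G X ≤ Mad G` holds for every `X`.
noncomputable def avgDegree {V : Type} [Fintype V] (G : SimpleGraph V) (X : Finset V) : ℝ :=
  2 * (inducedEdgeCnt G X : ℝ) / (#X : ℝ)

section AvgDegree

variable {V : Type} [Fintype V] (G : SimpleGraph V)

lemma avgDegree_le_card_sub_one {X : Finset V} (hX : X.Nonempty) :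
    avgDegree G X ≤ #X - 1 := by
  have hn : (0 : ℝ) < #X := by exact_mod_cast hX.card_pos
  have h : (inducedEdgeCnt G X : ℝ) ≤ ((#X).choose 2 : ℕ) := by
    exact_mod_cast inducedEdgeCnt_le_choose_two G X
  rw [Nat.cast_choose_two] at h
  rw [avgDegree, div_le_iff₀ hn]
  linarith

lemma avgDegree_eq_card_sub_one_iff {X : Finset V} (hX : X.Nonempty) :
    avgDegree G X = #X - 1 ↔ G.IsClique (X : Set V) := by
  have hn : (#X : ℝ) ≠ 0 := by exact_mod_cast hX.card_pos.ne'
  rw [← inducedEdgeCnt_eq_choose_two_iff, avgDegree, div_eq_iff hn, ← @Nat.cast_inj ℝ,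
    Nat.cast_choose_two]
  constructor <;> intro h <;> linarith

lemma avgDegree_le_div_card (X : Finset V) : avgDegree G X ≤ 2 * edgeCnt G / #X := by
  unfold avgDegree
  gcongr
  exact_mod_cast inducedEdgeCnt_le_edgeCnt G X

lemma avgDegree_eq_div_card_iff {X : Finset V} (hX : X.Nonempty) :
    avgDegree G X = 2 * edgeCnt G / #X ↔ G.support ⊆ X := by
  have hn : (#X : ℝ) ≠ 0 := by exact_mod_cast hX.card_pos.ne'
  rw [← inducedEdgeCnt_eq_edgeCnt_iff, avgDegree, div_left_inj' hn, mul_right_inj' two_ne_zero,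
    Nat.cast_inj]

lemma avgDegree_nonneg (X : Finset V) : 0 ≤ avgDegree G X := by
  unfold avgDegree
  positivity

lemma finite_avgDegree : {d : ℝ | ∃ X : Finset V, X.Nonempty ∧ d = avgDegree G X}.Finite :=
  (Set.finite_range (avgDegree G)).subset fun _ ⟨X, _, hd⟩ => ⟨X, hd.symm⟩

lemma Mad_nonneg : 0 ≤ Mad G :=
  Real.sSup_nonneg fun _ ⟨X, _, hd⟩ => hd ▸ avgDegree_nonneg G X

lemma avgDegree_le_Mad (X : Finset V) : avgDegree G X ≤ Mad G := by
  rcases X.eq_empty_or_nonempty with rfl | hX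
  · simpa [avgDegree] using Mad_nonneg G
  · exact le_csSup (finite_avgDegree G).bddAbove ⟨X, hX, rfl⟩

lemma Mad_le {c : ℝ} (hc : 0 ≤ c) (h : ∀ X : Finset V, X.Nonempty → avgDegree G X ≤ c) :
    Mad G ≤ c :=
  Real.sSup_le (fun _ ⟨X, hX, hd⟩ => hd ▸ h X hX) hc

lemma exists_avgDegree_eq_Mad [Nonempty V] :
    ∃ X : Finset V, X.Nonempty ∧ avgDegree G X = Mad G := by
  have hne : {d : ℝ | ∃ X : Finset V, X.Nonempty ∧ d = avgDegree G X}.Nonempty :=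
    ⟨_, univ, univ_nonempty, rfl⟩
  obtain ⟨X, hX, hd⟩ := hne.csSup_mem (finite_avgDegree G)
  exact ⟨X, hX, hd.symm⟩

end AvgDegree

section MadBounds

variable {V : Type} [Fintype V] (G : SimpleGraph V)

lemma Mad_le_max (p : ℕ) : Mad G ≤ max ((p : ℝ) - 1) (2 * edgeCnt G / (p + 1)) := by
  refine Mad_le G (le_max_of_le_right (by positivity)) fun X hX => ?_
  rcases le_or_gt #X p with hXp | hXp
  · have hcast : (#X : ℝ) ≤ p := by exact_mod_cast hXp
    exact le_max_of_le_left ((avgDegree_le_card_sub_one G hX).trans (by linarith))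
  · have hcast : (p : ℝ) + 1 ≤ #X := by exact_mod_cast hXp
    refine le_max_of_le_right ((avgDegree_le_div_card G X).trans ?_)
    gcongr

lemma sub_one_le_Mad_of_isNClique {n : ℕ} {S : Finset V} (hS : G.IsNClique n S) :
    (n : ℝ) - 1 ≤ Mad G := by
  rcases S.eq_empty_or_nonempty with rfl | hne
  · have : n = 0 := by simpa using hS.card_eq.symm
    subst this
    linarith [Mad_nonneg G, Nat.cast_zero (R := ℝ)]
  · rw [← hS.card_eq, ← (avgDegree_eq_card_sub_one_iff G hne).2 hS.isClique]
    exact avgDegree_le_Mad G S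

lemma div_card_le_Mad_of_support_subset {X : Finset V} (hX : G.support ⊆ X) :
    2 * edgeCnt G / #X ≤ Mad G := by
  rcases X.eq_empty_or_nonempty with rfl | hne
  · simpa using Mad_nonneg G
  · rw [← (avgDegree_eq_div_card_iff G hne).2 hX]
    exact avgDegree_le_Mad G X

lemma isNClique_or_support_subset_of_avgDegree_eq_max (p : ℕ) (hm : 0 < edgeCnt G)
    {X : Finset V} (hX : X.Nonempty)
    (h : avgDegree G X = max ((p : ℝ) - 1) (2 * edgeCnt G / (p + 1))) :
    (G.IsNClique p X ∧ avgDegree G X = p - 1) ∨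
      (#X = p + 1 ∧ G.support ⊆ X ∧ avgDegree G X = 2 * edgeCnt G / (p + 1)) := by
  have hle_left := le_max_left ((p : ℝ) - 1) (2 * edgeCnt G / (p + 1))
  have hle_right := le_max_right ((p : ℝ) - 1) (2 * edgeCnt G / (p + 1))
  rcases le_or_gt #X p with hXp | hXp
  · have hcast : (#X : ℝ) ≤ p := by exact_mod_cast hXp
    have hup := avgDegree_le_card_sub_one G hX
    have hclique := (avgDegree_eq_card_sub_one_iff G hX).1 (by linarith)
    have hcard : #X = p := by exact_mod_cast (show (#X : ℝ) = p by linarith)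
    exact Or.inl ⟨⟨hclique, hcard⟩, by linarith⟩
  · have hcast : (p : ℝ) + 1 ≤ #X := by exact_mod_cast hXp
    have hm' : (0 : ℝ) < edgeCnt G := by exact_mod_cast hm
    have hup := avgDegree_le_div_card G X
    have hmono : 2 * (edgeCnt G : ℝ) / #X ≤ 2 * edgeCnt G / (p + 1) := by gcongr
    have hsupp := (avgDegree_eq_div_card_iff G hX).1 (by linarith)
    have hcard : (#X : ℝ) = p + 1 := by
      by_contra hne
      have : 2 * (edgeCnt G : ℝ) / #X < 2 * edgeCnt G / (p + 1) :=
        div_lt_div_of_pos_left (by positivity) (by positivity) (hcast.lt_of_ne' hne)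
      linarith
    exact Or.inr ⟨by exact_mod_cast hcard, hsupp, by linarith⟩

lemma Mad_eq_max_iff (p : ℕ) (hm : 0 < edgeCnt G) :
    Mad G = max ((p : ℝ) - 1) (2 * edgeCnt G / (p + 1)) ↔
      ((∃ S : Finset V, G.IsNClique p S) ∧
        max ((p : ℝ) - 1) (2 * edgeCnt G / (p + 1)) = p - 1) ∨
      (G.support.ncard ≤ p + 1 ∧
        max ((p : ℝ) - 1) (2 * edgeCnt G / (p + 1)) = 2 * edgeCnt G / (p + 1)) := by
  have hup := Mad_le_max G p
  constructor
  · intro hMad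
    have : Nonempty V := by
      obtain ⟨e, -⟩ := Set.nonempty_of_ncard_ne_zero hm.ne'
      exact ⟨e.out.1⟩
    obtain ⟨X, hX, hXMad⟩ := exists_avgDegree_eq_Mad G
    rcases isNClique_or_support_subset_of_avgDegree_eq_max G p hm hX (hXMad.trans hMad) with
      ⟨hS, hval⟩ | ⟨hcard, hsupp, hval⟩
    · exact Or.inl ⟨⟨X, hS⟩, by rw [← hMad, ← hXMad, hval]⟩
    · refine Or.inr ⟨?_, by rw [← hMad, ← hXMad, hval]⟩
      simpa [hcard] using Set.ncard_le_ncard hsupp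
  · rintro (⟨⟨S, hS⟩, hval⟩ | ⟨hcard, hval⟩)
    · linarith [sub_one_le_Mad_of_isNClique G hS]
    · classical
      have hpos : 0 < G.support.ncard := by
        by_contra h0
        have := edgeCnt_le_choose_two_ncard_support G
        rw [Nat.eq_zero_of_not_pos h0, Nat.choose_zero_succ] at this
        omega
      have hlow := div_card_le_Mad_of_support_subset G (X := G.support.toFinset) (by simp)
      rw [← Set.ncard_eq_toFinset_card'] at hlow
      have hmono : 2 * (edgeCnt G : ℝ) / (p + 1) ≤ 2 * edgeCnt G / G.support.ncard := by
        gcongr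
        exact_mod_cast hcard
      linarith

end MadBounds

lemma gMax_eq {m : ℕ} {M : ℝ}
    (hle : ∀ (V : Type) [Fintype V] (G : SimpleGraph V), edgeCnt G = m → Mad G ≤ M)
    (hex : ∃ (V : Type) (_ : Fintype V) (G : SimpleGraph V), edgeCnt G = m ∧ Mad G = M) :
    gMax m = M := by
  refine IsGreatest.csSup_eq ⟨?_, ?_⟩
  · obtain ⟨V, _, G, hm, hM⟩ := hex
    exact ⟨V, _, G, hm, hM.symm⟩
  · rintro d ⟨V, _, G, hm, rfl⟩
    exact hle V G hm

lemma exists_le_edgeCnt_eq {V : Type} [Fintype V] {H K : SimpleGraph V} (hHK : H ≤ K) {m : ℕ}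
    (hH : edgeCnt H ≤ m) (hK : m ≤ edgeCnt K) :
    ∃ G : SimpleGraph V, H ≤ G ∧ edgeCnt G = m := by
  obtain ⟨E, hHE, hEK, hE⟩ := Set.exists_subsuperset_card_eq (edgeSet_mono hHK) hH hK
  have hdiag : Disjoint E Sym2.diagSet :=
    Set.subset_compl_iff_disjoint_right.1 (hEK.trans (edgeSet_subset_compl_diagSet K))
  refine ⟨fromEdgeSet E, ?_, ?_⟩
  · rw [← edgeSet_subset_edgeSet, edgeSet_fromEdgeSet, hdiag.sdiff_eq_left]
    exact hHE
  · rw [edgeCnt, edgeSet_fromEdgeSet, hdiag.sdiff_eq_left, hE]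

lemma edgeCnt_map {V W : Type} [Fintype V] [Fintype W] (f : V ↪ W) (G : SimpleGraph V) :
    edgeCnt (G.map f) = edgeCnt G := by
  rw [edgeCnt, edgeSet_map, Set.ncard_image_of_injective _ f.sym2Map.injective, edgeCnt]

lemma exists_isNClique_edgeCnt_eq {p m : ℕ} (hm₁ : p.choose 2 ≤ m) (hm₂ : m ≤ p.choose 2 + p) :
    ∃ G : SimpleGraph (Fin (p + 1)), edgeCnt G = m ∧
      ∃ S : Finset (Fin (p + 1)), G.IsNClique p S := by
  classical
  have hH : edgeCnt ((⊤ : SimpleGraph (Fin p)).map Fin.castSuccEmb) = p.choose 2 := by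
    rw [edgeCnt_map, (edgeCnt_eq_choose_two_iff _).2 rfl, Fintype.card_fin]
  have hK : edgeCnt (⊤ : SimpleGraph (Fin (p + 1))) = p.choose 2 + p := by
    rw [(edgeCnt_eq_choose_two_iff _).2 rfl, Fintype.card_fin, Nat.choose_succ_succ', add_comm,
      Nat.choose_one_right]
  obtain ⟨G, hHG, hG⟩ :=
    exists_le_edgeCnt_eq le_top (hH.trans_le hm₁) (hm₂.trans_eq hK.symm)
  have hclique : (⊤ : SimpleGraph (Fin p)).IsNClique p univ := by
    simp [isNClique_iff]
  exact ⟨G, hG, _, (hclique.map).mono hHG⟩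

lemma gMax_eq_max {p m : ℕ} (hm₁ : p.choose 2 ≤ m) (hm₂ : m ≤ p.choose 2 + p) :
    gMax m = max ((p : ℝ) - 1) (2 * m / (p + 1)) := by
  refine gMax_eq (fun V _ G hG => hG ▸ Mad_le_max G p) ?_
  obtain ⟨G, hG, S, hS⟩ := exists_isNClique_edgeCnt_eq hm₁ hm₂
  refine ⟨_, inferInstance, G, hG, le_antisymm (hG ▸ Mad_le_max G p) (max_le ?_ ?_)⟩
  · exact sub_one_le_Mad_of_isNClique G hS
  · simpa [hG] using div_card_le_Mad_of_support_subset G (X := univ) (by simp)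

lemma two_mul_choose_two_add_div (p r : ℕ) :
    2 * ((p.choose 2 + r : ℕ) : ℝ) / (p + 1) = p - 1 + (2 * r + 1 - p) / (p + 1) := by
  rw [Nat.cast_add, Nat.cast_choose_two]
  field_simp
  ring

lemma two_mul_choose_two_div_lt {p : ℕ} (hp : 2 ≤ p) :
    2 * ((p.choose 2 : ℕ) : ℝ) / (p + 1) < p - 1 := by
  have hp' : (2 : ℝ) ≤ p := by exact_mod_cast hp
  have hneg : ((2 * 0 + 1 - p) : ℝ) / (p + 1) < 0 :=
    div_neg_of_neg_of_pos (by linarith) (by positivity)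
  simpa using (two_mul_choose_two_add_div p 0).trans_lt (by linarith)

section Extremal

variable {V : Type} [Fintype V] (G : SimpleGraph V)

lemma support_eq_of_isNClique {p : ℕ} (hp : 2 ≤ p) (hm : edgeCnt G = p.choose 2) {S : Finset V}
    (hS : G.IsNClique p S) : G.support = S := by
  refine Set.Subset.antisymm ?_ fun v hv => ?_
  · rw [← inducedEdgeCnt_eq_edgeCnt_iff, hm, ← hS.card_eq]
    exact (inducedEdgeCnt_eq_choose_two_iff G S).2 hS.isClique
  · obtain ⟨u, hu, huv⟩ := exists_mem_ne (hS.card_eq ▸ hp) v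
    exact ⟨u, hS.isClique hv hu huv.symm⟩

lemma exists_isNClique_iff_isClique_support {p : ℕ} (hp : 2 ≤ p) (hm : edgeCnt G = p.choose 2) :
    (∃ S : Finset V, G.IsNClique p S) ↔ G.IsClique G.support ∧ G.support.ncard = p := by
  classical
  constructor
  · rintro ⟨S, hS⟩
    rw [support_eq_of_isNClique G hp hm hS, Set.ncard_coe_finset]
    exact ⟨hS.isClique, hS.card_eq⟩
  · rintro ⟨hclique, hcard⟩
    refine ⟨G.support.toFinset, ?_, ?_⟩
    · simpa using hclique
    · rw [← hcard, Set.ncard_eq_toFinset_card']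

lemma Mad_eq_sub_one_iff {p : ℕ} (hp : 2 ≤ p) (hm : edgeCnt G = p.choose 2) :
    Mad G = p - 1 ↔ G.IsClique G.support ∧ G.support.ncard = p := by
  have hdens := two_mul_choose_two_div_lt hp
  have hiff := Mad_eq_max_iff G p (hm ▸ Nat.choose_pos hp)
  rw [hm, max_eq_left hdens.le] at hiff
  rw [hiff, ← exists_isNClique_iff_isClique_support G hp hm]
  simp [hdens.ne']

lemma Mad_eq_max_iff_of_edgeCnt_eq {p r : ℕ} (hr : 0 < r) (hm : edgeCnt G = p.choose 2 + r) :
    Mad G = max ((p : ℝ) - 1) (2 * ((p.choose 2 + r : ℕ) : ℝ) / (p + 1)) ↔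
      ((∃ S : Finset V, G.IsNClique p S) ∧ 2 * r + 1 ≤ p) ∨
      (G.support.ncard = p + 1 ∧ p ≤ 2 * r + 1) := by
  have hsupp : p + 1 ≤ G.support.ncard := by
    by_contra h
    have := (edgeCnt_le_choose_two_ncard_support G).trans
      (Nat.choose_le_choose 2 (show G.support.ncard ≤ p by omega))
    omega
  have hsupp_iff : G.support.ncard ≤ p + 1 ↔ G.support.ncard = p + 1 := by omega
  have hpos : (0 : ℝ) < p + 1 := by positivity
  rw [← hm, Mad_eq_max_iff G p (by omega), hsupp_iff, hm, two_mul_choose_two_add_div,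
    max_eq_left_iff, max_eq_right_iff, add_le_iff_nonpos_right, le_add_iff_nonneg_right,
    div_le_iff₀ hpos, le_div_iff₀ hpos, zero_mul, sub_nonpos, sub_nonneg]
  norm_cast

end Extremal

/-- single graph optimizing `Mad`: the value of `g(m)` and the
characterization of the extremal graphs. -/
theorem gMax_formula_and_extremal (p : ℕ) (hp : 2 ≤ p) :
    (gMax (Nat.choose p 2) = (p : ℝ) - 1 ∧
      ∀ (V : Type) [Fintype V] (G : SimpleGraph V), edgeCnt G = Nat.choose p 2 →
        (Mad G = (p : ℝ) - 1 ↔ (G.IsClique G.support ∧ G.support.ncard = p))) ∧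
    (∀ r : ℕ, 0 < r → r < p →
      gMax (Nat.choose p 2 + r) =
        max ((p : ℝ) - 1) (2 * ((Nat.choose p 2 + r : ℕ) : ℝ) / ((p : ℝ) + 1)) ∧
      ∀ (V : Type) [Fintype V] (G : SimpleGraph V), edgeCnt G = Nat.choose p 2 + r →
        ((2 * r + 1 < p →
            (Mad G = gMax (Nat.choose p 2 + r) ↔ ∃ S : Finset V, G.IsNClique p S)) ∧
         (p < 2 * r + 1 →
            (Mad G = gMax (Nat.choose p 2 + r) ↔ G.support.ncard = p + 1)) ∧
         (p = 2 * r + 1 →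
            (Mad G = gMax (Nat.choose p 2 + r) ↔
              ((∃ S : Finset V, G.IsNClique p S) ∨ G.support.ncard = p + 1))))) := by
  refine ⟨⟨?_, fun V _ G hG => Mad_eq_sub_one_iff G hp hG⟩, fun r hr₀ hrp => ?_⟩
  · rw [gMax_eq_max le_rfl (Nat.le_add_right _ p), max_eq_left (two_mul_choose_two_div_lt hp).le]
  have hgMax := gMax_eq_max (p := p) (Nat.le_add_right _ r) (by omega)
  refine ⟨hgMax, fun V _ G hG => ?_⟩
  rw [hgMax, Mad_eq_max_iff_of_edgeCnt_eq G hr₀ hG]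
  refine ⟨fun hA => ?_, fun hB => ?_, fun hC => ?_⟩
  · simp [hA.le, hA.not_ge]
  · simp [hB.le, hB.not_ge]
  · simp [hC]
end

section
/- Let p ≥ 3 be an integer and suppose the complete graph K_n admits an edge decomposition into b' complete subgraphs isomorphic to K_p and b'' complete subgraphs isomorphic to K_{p+1} (equivalently, a pairwise balanced design of order n and index 1 with b' blocks of size p and b'' blocks of size p+1 exists). Then, for k = b' + b'', one has M(k,n) = (p−1)·k + b''. -/
private lemma two_mul_choose_two (q : ℕ) : 2 * q.choose 2 = q * (q - 1) := by
  rw [Nat.choose_two_right, Nat.two_mul_div_two_of_even (Nat.even_mul_pred_self q)]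

private lemma ncard_notDiag {V : Type} [DecidableEq V] (T : Finset V) :
    {e : Sym2 V | ¬ e.IsDiag ∧ ∀ v ∈ e, v ∈ T}.ncard = T.card.choose 2 := by
  have himg : {e : Sym2 V | ¬ e.IsDiag ∧ ∀ v ∈ e, v ∈ T}
      = Sym2.map (Subtype.val : {x // x ∈ T} → V) '' {e : Sym2 {x // x ∈ T} | ¬ e.IsDiag} := by
    ext e
    induction e using Sym2.ind with
    | _ a b =>
      constructor
      · rintro ⟨hd, hm⟩
        refine ⟨s(⟨a, hm a (Sym2.mem_mk_left a b)⟩, ⟨b, hm b (Sym2.mem_mk_right a b)⟩), ?_, rfl⟩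
        simp only [Set.mem_setOf_eq, Sym2.mk_isDiag_iff] at hd ⊢
        exact fun h => hd (congrArg Subtype.val h)
      · rintro ⟨e', hd', he⟩
        revert hd' he
        induction e' using Sym2.ind with
        | _ x y =>
          intro hd' he
          rw [Sym2.map_pair_eq] at he
          rw [← he]
          simp only [Set.mem_setOf_eq, Sym2.mk_isDiag_iff] at hd' ⊢
          refine ⟨fun h => hd' (Subtype.ext h), ?_⟩
          intro v hv
          rw [Sym2.mem_iff] at hv
          rcases hv with rfl | rfl
          exacts [x.2, y.2]
  rw [himg, Set.ncard_image_of_injective _ (Sym2.map.injective Subtype.val_injective)]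
  classical
  rw [← Nat.card_coe_set_eq, Nat.card_eq_fintype_card]
  rw [← Fintype.card_coe T, ← Sym2.card_subtype_not_diag]
  exact Fintype.card_congr (Equiv.subtypeEquiv (Equiv.refl _) (by simp))

private lemma inducedEdgeCnt_cliqueOn {n : ℕ} (S X : Finset (Fin n)) :
    inducedEdgeCnt (cliqueOn S) X = ((S ∩ X).card).choose 2 := by
  rw [← ncard_notDiag]
  unfold inducedEdgeCnt
  congr 1
  ext e
  induction e using Sym2.ind with
  | _ a b =>
    simp only [Set.mem_setOf_eq, SimpleGraph.mem_edgeSet, cliqueOn, SimpleGraph.fromRel_adj,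
      Sym2.mk_isDiag_iff, Sym2.mem_iff, Finset.mem_inter]
    constructor
    · rintro ⟨⟨hne, h⟩, hX⟩
      refine ⟨hne, ?_⟩
      rintro v (rfl | rfl) <;>
        exact ⟨by tauto, hX _ (by tauto)⟩
    · rintro ⟨hne, h⟩
      exact ⟨⟨hne, Or.inl ⟨(h a (Or.inl rfl)).1, (h b (Or.inr rfl)).1⟩⟩,
        fun v hv => (h v hv).2⟩

private lemma edgeCnt_eq_univ {V : Type} [Fintype V] (G : SimpleGraph V) :
    edgeCnt G = inducedEdgeCnt G Finset.univ := by
  unfold edgeCnt inducedEdgeCnt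
  congr 1
  ext e
  simp

private lemma edgeCnt_cliqueOn {n : ℕ} (S : Finset (Fin n)) :
    edgeCnt (cliqueOn S) = S.card.choose 2 := by
  rw [edgeCnt_eq_univ, inducedEdgeCnt_cliqueOn, Finset.inter_univ]

private lemma iec_le_edgeCnt {V : Type} [Fintype V] (G : SimpleGraph V) (X : Finset V) :
    inducedEdgeCnt G X ≤ edgeCnt G :=
  Set.ncard_le_ncard (fun _ he => he.1) (Set.toFinite _)

private lemma iec_le_choose {V : Type} [Fintype V] [DecidableEq V] (G : SimpleGraph V)
    (X : Finset V) : inducedEdgeCnt G X ≤ X.card.choose 2 := by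
  rw [← ncard_notDiag]
  exact Set.ncard_le_ncard
    (fun e he => ⟨SimpleGraph.not_isDiag_of_mem_edgeSet G he.1, he.2⟩) (Set.toFinite _)

private lemma mad_bddAbove {V : Type} [Fintype V] (G : SimpleGraph V) :
    BddAbove {d : ℝ | ∃ X : Finset V, X.Nonempty ∧
      d = 2 * (inducedEdgeCnt G X : ℝ) / (X.card : ℝ)} := by
  refine ⟨2 * edgeCnt G, ?_⟩
  rintro d ⟨X, hX, rfl⟩
  have ht : (1 : ℝ) ≤ (X.card : ℝ) := by exact_mod_cast hX.card_pos
  have h1 : (2 : ℝ) * (inducedEdgeCnt G X : ℝ) / (X.card : ℝ) ≤ 2 * (inducedEdgeCnt G X : ℝ) :=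
    div_le_self (by positivity) ht
  have h2 : (inducedEdgeCnt G X : ℝ) ≤ (edgeCnt G : ℝ) := by
    exact_mod_cast iec_le_edgeCnt G X
  linarith

private lemma le_mad {V : Type} [Fintype V] (G : SimpleGraph V) (X : Finset V)
    (hX : X.Nonempty) : 2 * (inducedEdgeCnt G X : ℝ) / (X.card : ℝ) ≤ Mad G :=
  le_csSup (mad_bddAbove G) ⟨X, hX, rfl⟩

private lemma mad_le {V : Type} [Fintype V] (G : SimpleGraph V) {c : ℝ} (hc : 0 ≤ c)
    (h : ∀ X : Finset V, X.Nonempty → 2 * (inducedEdgeCnt G X : ℝ) / (X.card : ℝ) ≤ c) :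
    Mad G ≤ c := by
  apply Real.sSup_le _ hc
  rintro d ⟨X, hX, rfl⟩
  exact h X hX

private lemma mad_cliqueOn {n : ℕ} (S : Finset (Fin n)) (hS : S.Nonempty) :
    Mad (cliqueOn S) = (S.card : ℝ) - 1 := by
  have hq : 1 ≤ S.card := hS.card_pos
  have hqR : (1 : ℝ) ≤ (S.card : ℝ) := by exact_mod_cast hq
  apply le_antisymm
  · apply mad_le _ (by linarith)
    intro X hX
    rw [inducedEdgeCnt_cliqueOn]
    have h1 : (S ∩ X).card ≤ S.card := Finset.card_le_card Finset.inter_subset_left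
    have h2 : (S ∩ X).card ≤ X.card := Finset.card_le_card Finset.inter_subset_right
    have htX : (0 : ℝ) < (X.card : ℝ) := by exact_mod_cast hX.card_pos
    have key : 2 * ((S ∩ X).card.choose 2) ≤ X.card * (S.card - 1) := by
      rw [two_mul_choose_two]
      rcases Nat.eq_zero_or_pos (S ∩ X).card with h | h
      · simp [h]
      · exact Nat.mul_le_mul h2 (Nat.sub_le_sub_right h1 1)
    rw [div_le_iff₀ htX]
    have keyR : ((2 * ((S ∩ X).card.choose 2) : ℕ) : ℝ) ≤ ((X.card * (S.card - 1) : ℕ) : ℝ) := by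
      exact_mod_cast key
    push_cast [Nat.cast_sub hq] at keyR
    linarith
  · have hmem := le_mad (cliqueOn S) S hS
    rw [inducedEdgeCnt_cliqueOn, Finset.inter_self] at hmem
    have h2 : ((2 * S.card.choose 2 : ℕ) : ℝ) = (S.card : ℝ) * ((S.card : ℝ) - 1) := by
      have h := two_mul_choose_two S.card
      have h' : ((2 * S.card.choose 2 : ℕ) : ℝ) = ((S.card * (S.card - 1) : ℕ) : ℝ) := by
        exact_mod_cast h
      push_cast [Nat.cast_sub hq] at h'
      push_cast
      linarith
    have hq0 : (S.card : ℝ) ≠ 0 := by linarith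
    have heq : 2 * ((S.card.choose 2 : ℕ) : ℝ) / (S.card : ℝ) = (S.card : ℝ) - 1 := by
      rw [div_eq_iff hq0]
      push_cast at h2 ⊢
      linarith
    linarith [hmem, heq.symm.le]

private lemma key_ineq {e m t p : ℝ} (hp : 1 ≤ p) (ht : 1 ≤ t) (he : 0 ≤ e)
    (h1 : e ≤ m) (h2 : 2 * e ≤ t * (t - 1)) (hcons : 0 ≤ (t - p) * (t - p - 1)) :
    2 * e / t ≤ m / p + (p - 1) / 2 := by
  rw [div_add_div _ _ (by linarith : p ≠ 0) (two_ne_zero),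
    div_le_div_iff₀ (by linarith) (by positivity)]
  rcases le_or_gt (2 * p) t with h | h
  · nlinarith [mul_nonneg (by linarith : (0:ℝ) ≤ 2 * t) (by linarith : (0:ℝ) ≤ m - e),
      mul_nonneg he (by linarith : (0:ℝ) ≤ t - 2 * p),
      mul_nonneg (mul_nonneg (by linarith : (0:ℝ) ≤ p) (by linarith : (0:ℝ) ≤ p - 1))
        (by linarith : (0:ℝ) ≤ t)]
  · nlinarith [mul_nonneg (by linarith : (0:ℝ) ≤ 2 * t) (by linarith : (0:ℝ) ≤ m - e),
      mul_nonneg (by linarith : (0:ℝ) ≤ 2 * p - t) (by linarith : (0:ℝ) ≤ t * (t - 1) - 2 * e),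
      mul_nonneg (by linarith : (0:ℝ) ≤ t) hcons]

private lemma cons_nonneg (t p : ℕ) : (0:ℝ) ≤ ((t:ℝ) - p) * ((t:ℝ) - p - 1) := by
  rcases le_or_gt t p with h | h
  · have : (t:ℝ) ≤ p := by exact_mod_cast h
    nlinarith
  · have : (p:ℝ) + 1 ≤ t := by exact_mod_cast h
    nlinarith

private lemma mad_le_linear {V : Type} [Fintype V] [DecidableEq V] (G : SimpleGraph V)
    {p : ℕ} (hp : 1 ≤ p) :
    Mad G ≤ (edgeCnt G : ℝ) / (p : ℝ) + ((p : ℝ) - 1) / 2 := by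
  have hpR : (1:ℝ) ≤ (p:ℝ) := by exact_mod_cast hp
  apply mad_le
  · have h0 : (0:ℝ) ≤ (edgeCnt G : ℝ) / (p : ℝ) := by positivity
    linarith
  · intro X hX
    have ht : 1 ≤ X.card := hX.card_pos
    have htR : (1:ℝ) ≤ (X.card : ℝ) := by exact_mod_cast ht
    have h1 : (inducedEdgeCnt G X : ℝ) ≤ (edgeCnt G : ℝ) := by
      exact_mod_cast iec_le_edgeCnt G X
    have h2 : 2 * (inducedEdgeCnt G X : ℝ) ≤ (X.card:ℝ) * ((X.card:ℝ) - 1) := by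
      have hch := iec_le_choose G X
      have h2' : 2 * inducedEdgeCnt G X ≤ X.card * (X.card - 1) := by
        rw [← two_mul_choose_two]
        exact Nat.mul_le_mul_left 2 hch
      have h2R : ((2 * inducedEdgeCnt G X : ℕ) : ℝ) ≤ ((X.card * (X.card - 1) : ℕ) : ℝ) := by
        exact_mod_cast h2'
      push_cast [Nat.cast_sub ht] at h2R
      linarith
    exact key_ineq hpR htR (by positivity) h1 h2 (cons_nonneg X.card p)

private lemma sum_edgeCnt {k n : ℕ} {G : Fin k → SimpleGraph (Fin n)} (h : IsKDecomp G) :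
    ∑ i, edgeCnt (G i) = edgeCnt (⊤ : SimpleGraph (Fin n)) := by
  classical
  have hfin : ∀ i, ((G i).edgeSet).Finite := fun i => Set.toFinite _
  have hcard : ∀ i, edgeCnt (G i) = ((hfin i).toFinset).card := fun i =>
    Set.ncard_eq_toFinset_card _ (hfin i)
  have hdisj : ∀ i ∈ Finset.univ, ∀ j ∈ Finset.univ, i ≠ j →
      Disjoint ((hfin i).toFinset) ((hfin j).toFinset) := by
    intro i _ j _ hij
    rw [Set.Finite.disjoint_toFinset]
    exact h.1 i j hij
  have hbu : Finset.univ.biUnion (fun i => (hfin i).toFinset)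
      = (Set.toFinite (⊤ : SimpleGraph (Fin n)).edgeSet).toFinset := by
    apply Finset.coe_injective
    rw [Finset.coe_biUnion]
    simp only [Set.Finite.coe_toFinset, Finset.coe_univ, Set.mem_univ, Set.iUnion_true]
    exact h.2
  calc ∑ i, edgeCnt (G i) = ∑ i, ((hfin i).toFinset).card :=
        Finset.sum_congr rfl (fun i _ => hcard i)
    _ = (Finset.univ.biUnion fun i => (hfin i).toFinset).card :=
        (Finset.card_biUnion hdisj).symm
    _ = edgeCnt (⊤ : SimpleGraph (Fin n)) := by
        rw [hbu, ← Set.ncard_eq_toFinset_card]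
        rfl

/-- pairwise balanced designs with block sizes `{p, p+1}` give the
exact value of `M(k,n)`. -/
theorem madSum_PBD (p n b' b'' : ℕ) (hp : 3 ≤ p)
    (hdecomp : ∃ S : Fin (b' + b'') → Finset (Fin n),
      IsKDecomp (fun i => cliqueOn (S i)) ∧
      (Finset.univ.filter (fun i => (S i).card = p)).card = b' ∧
      (Finset.univ.filter (fun i => (S i).card = p + 1)).card = b'') :
    MSum (b' + b'') n = ((p : ℝ) - 1) * ((b' : ℝ) + (b'' : ℝ)) + (b'' : ℝ) := by
  obtain ⟨S, hdec, hb1, hb2⟩ := hdecomp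
  have hp1 : 1 ≤ p := by omega
  have hpR : (1:ℝ) ≤ (p:ℝ) := by exact_mod_cast hp1
  set F1 := Finset.univ.filter (fun i : Fin (b' + b'') => (S i).card = p) with hF1
  set F2 := Finset.univ.filter (fun i : Fin (b' + b'') => (S i).card = p + 1) with hF2
  have hdisjF : Disjoint F1 F2 := by
    rw [Finset.disjoint_left]
    intro i h1 h2
    rw [hF1, Finset.mem_filter] at h1
    rw [hF2, Finset.mem_filter] at h2
    omega
  have huniv : F1 ∪ F2 = Finset.univ := by
    apply Finset.eq_univ_of_card
    rw [Finset.card_union_of_disjoint hdisjF, hb1, hb2, Fintype.card_fin]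
  have hmemF1 : ∀ i ∈ F1, (S i).card = p := by
    intro i hi; rw [hF1, Finset.mem_filter] at hi; exact hi.2
  have hmemF2 : ∀ i ∈ F2, (S i).card = p + 1 := by
    intro i hi; rw [hF2, Finset.mem_filter] at hi; exact hi.2
  have hcardS : ∀ i, (S i).card = p ∨ (S i).card = p + 1 := by
    intro i
    have hi : i ∈ F1 ∪ F2 := huniv ▸ Finset.mem_univ i
    rcases Finset.mem_union.1 hi with h | h
    · rw [hF1, Finset.mem_filter] at h; exact Or.inl h.2
    · rw [hF2, Finset.mem_filter] at h; exact Or.inr h.2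
  have hSne : ∀ i, (S i).Nonempty := by
    intro i
    rw [← Finset.card_pos]
    rcases hcardS i with h | h <;> omega
  -- total edge count
  have hEtot : edgeCnt (⊤ : SimpleGraph (Fin n)) = b' * p.choose 2 + b'' * (p+1).choose 2 := by
    rw [← sum_edgeCnt hdec]
    have e1 : ∑ i ∈ F1, ((S i).card).choose 2 = b' * p.choose 2 := by
      rw [Finset.sum_congr rfl (g := fun _ => p.choose 2)
        (fun i hi => by rw [hmemF1 i hi]),
        Finset.sum_const, hb1, smul_eq_mul]
    have e2 : ∑ i ∈ F2, ((S i).card).choose 2 = b'' * (p+1).choose 2 := by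
      rw [Finset.sum_congr rfl (g := fun _ => (p+1).choose 2)
        (fun i hi => by rw [hmemF2 i hi]),
        Finset.sum_const, hb2, smul_eq_mul]
    calc ∑ i, edgeCnt (cliqueOn (S i)) = ∑ i, ((S i).card).choose 2 := by
          exact Finset.sum_congr rfl (fun i _ => edgeCnt_cliqueOn (S i))
      _ = ∑ i ∈ F1 ∪ F2, ((S i).card).choose 2 := by rw [huniv]
      _ = ∑ i ∈ F1, ((S i).card).choose 2 + ∑ i ∈ F2, ((S i).card).choose 2 :=
          Finset.sum_union hdisjF
      _ = b' * p.choose 2 + b'' * (p+1).choose 2 := by rw [e1, e2]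
  -- cast facts about binomials
  have hc1 : ((p.choose 2 : ℕ) : ℝ) = (p:ℝ) * ((p:ℝ) - 1) / 2 := by
    have h := two_mul_choose_two p
    have h' : ((2 * p.choose 2 : ℕ) : ℝ) = ((p * (p - 1) : ℕ) : ℝ) := by exact_mod_cast h
    push_cast [Nat.cast_sub hp1] at h'
    linarith
  have hc2 : (((p+1).choose 2 : ℕ) : ℝ) = ((p:ℝ) + 1) * (p:ℝ) / 2 := by
    have h := two_mul_choose_two (p+1)
    have h' : ((2 * (p+1).choose 2 : ℕ) : ℝ) = (((p+1) * ((p+1) - 1) : ℕ) : ℝ) := by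
      exact_mod_cast h
    push_cast at h'
    linarith
  have hp0 : (p:ℝ) ≠ 0 := by linarith
  -- upper bound for any decomposition
  have hub : ∀ s ∈ {s : ℝ | ∃ G : Fin (b' + b'') → SimpleGraph (Fin n),
      IsKDecomp G ∧ s = ∑ i, Mad (G i)},
      s ≤ ((p : ℝ) - 1) * ((b' : ℝ) + (b'' : ℝ)) + (b'' : ℝ) := by
    rintro s ⟨G, hG, rfl⟩
    have step1 : ∑ i, Mad (G i) ≤ ∑ i, ((edgeCnt (G i) : ℝ) / (p:ℝ) + ((p:ℝ) - 1) / 2) :=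
      Finset.sum_le_sum (fun i _ => mad_le_linear (G i) hp1)
    have step2 : ∑ i, ((edgeCnt (G i) : ℝ) / (p:ℝ) + ((p:ℝ) - 1) / 2)
        = ((edgeCnt (⊤ : SimpleGraph (Fin n)) : ℕ) : ℝ) / (p:ℝ)
          + ((b' : ℝ) + (b'' : ℝ)) * (((p:ℝ) - 1) / 2) := by
      rw [Finset.sum_add_distrib, Finset.sum_const, Finset.card_univ, Fintype.card_fin,
        nsmul_eq_mul, ← Finset.sum_div]
      congr 1
      · congr 1
        rw [← Nat.cast_sum, sum_edgeCnt hG]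
      · push_cast
        ring
    have step3 : ((edgeCnt (⊤ : SimpleGraph (Fin n)) : ℕ) : ℝ) / (p:ℝ)
        + ((b' : ℝ) + (b'' : ℝ)) * (((p:ℝ) - 1) / 2)
        = ((p : ℝ) - 1) * ((b' : ℝ) + (b'' : ℝ)) + (b'' : ℝ) := by
      rw [hEtot]
      push_cast [hc1, hc2]
      field_simp
      ring
    linarith
  have hRHS0 : (0:ℝ) ≤ ((p : ℝ) - 1) * ((b' : ℝ) + (b'' : ℝ)) + (b'' : ℝ) := by
    have h1 : (0:ℝ) ≤ (b' : ℝ) + (b'' : ℝ) := by positivity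
    have h2 : (0:ℝ) ≤ (b'' : ℝ) := by positivity
    nlinarith
  -- lower bound
  have hmem : (∑ i, Mad (cliqueOn (S i))) ∈ {s : ℝ | ∃ G : Fin (b' + b'') → SimpleGraph (Fin n),
      IsKDecomp G ∧ s = ∑ i, Mad (G i)} := ⟨fun i => cliqueOn (S i), hdec, rfl⟩
  have hbdd : BddAbove {s : ℝ | ∃ G : Fin (b' + b'') → SimpleGraph (Fin n),
      IsKDecomp G ∧ s = ∑ i, Mad (G i)} :=
    ⟨_, hub⟩
  have hsum : ∑ i, Mad (cliqueOn (S i))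
      = ((p : ℝ) - 1) * ((b' : ℝ) + (b'' : ℝ)) + (b'' : ℝ) := by
    have e1 : ∑ i ∈ F1, (((S i).card : ℝ) - 1) = (b' : ℝ) * ((p:ℝ) - 1) := by
      rw [Finset.sum_congr rfl (g := fun _ => (p:ℝ) - 1)
        (fun i hi => by rw [hmemF1 i hi]),
        Finset.sum_const, hb1, nsmul_eq_mul]
    have e2 : ∑ i ∈ F2, (((S i).card : ℝ) - 1) = (b'' : ℝ) * (p:ℝ) := by
      rw [Finset.sum_congr rfl (g := fun _ => (p:ℝ))
        (fun i hi => by rw [hmemF2 i hi]; push_cast; ring),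
        Finset.sum_const, hb2, nsmul_eq_mul]
    calc ∑ i, Mad (cliqueOn (S i)) = ∑ i, (((S i).card : ℝ) - 1) :=
          Finset.sum_congr rfl (fun i _ => mad_cliqueOn (S i) (hSne i))
      _ = ∑ i ∈ F1 ∪ F2, (((S i).card : ℝ) - 1) := by rw [huniv]
      _ = ∑ i ∈ F1, (((S i).card : ℝ) - 1) + ∑ i ∈ F2, (((S i).card : ℝ) - 1) :=
          Finset.sum_union hdisjF
      _ = ((p : ℝ) - 1) * ((b' : ℝ) + (b'' : ℝ)) + (b'' : ℝ) := by rw [e1, e2]; ring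
  have hlow := le_csSup hbdd hmem
  rw [hsum] at hlow
  exact le_antisymm (Real.sSup_le hub hRHS0) hlow
end
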